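/- For x ∈ ℝ², write x = x_a·(1,−1) + x_c·(1,1) (so x_a, x_c ∈ ℝ are uniquely determined). Let φ(u) = 1 − e^{−u}/2, and define f : ℝ² → ℝ by f(x) = 2·x_c·φ(x_a) if x_a ≥ 0 and 0 ≤ x_c ≤ x_a/2; f(x) = 2·(x_a − x_c)·φ(x_a) + (2·x_c − x_a) if x_a ≥ 0 and x_a/2 < x_c ≤ x_a; and f(x) = x_c otherwise. Define f∞ : ℝ² → ℝ by f∞(x) = 2·x_c if x_a ≥ 0 and 0 ≤ x_c ≤ x_a/2; f∞(x) = x_a if x_a ≥ 0 and x_a/2 < x_c ≤ x_a; and f∞(x) = x_c otherwise. Then: f is Lipschitz continuous; f is SISTr; f(c·x)/c → f∞(x) as c → ∞ for every x ∈ ℝ²; f∞ is SISTr at the origin (indeed f∞(c·(1,1)) = c for all c ∈ ℝ); but for every ā > 0, f∞ is not SISTr at x̄ = ā·(1,−1), since f∞(x̄ + c·(1,1)) = ā for all c ∈ [ā/2, ā]. -/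

import Mathlib

/-- `g : ℝ² → ℝ` is strictly increasing under scalar translation (SISTr)
at `x`: `c ↦ g(x + c·(1,1))` is strictly increasing and onto `ℝ`. -/
def SISTrAt (g : (Fin 2 → ℝ) → ℝ) (x : Fin 2 → ℝ) : Prop :=
  StrictMono (fun c : ℝ => g (fun i => x i + c)) ∧
    Function.Surjective (fun c : ℝ => g (fun i => x i + c))

/-- `g` is SISTr if it is SISTr at every point. -/
def SISTr (g : (Fin 2 → ℝ) → ℝ) : Prop :=
  ∀ x : Fin 2 → ℝ, SISTrAt g x

/-- `x_a` coordinate of `x = x_a·(1,−1) + x_c·(1,1)`. -/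
noncomputable def xa (x : Fin 2 → ℝ) : ℝ := (x 0 - x 1) / 2

/-- `x_c` coordinate of `x = x_a·(1,−1) + x_c·(1,1)`. -/
noncomputable def xc (x : Fin 2 → ℝ) : ℝ := (x 0 + x 1) / 2

/-- `φ(u) = 1 − e^{−u}/2`. -/
noncomputable def phi (u : ℝ) : ℝ := 1 - Real.exp (-u) / 2

/-- The function `f` of the counterexample. -/
noncomputable def fEx (x : Fin 2 → ℝ) : ℝ :=
  if 0 ≤ xa x ∧ 0 ≤ xc x ∧ xc x ≤ xa x / 2 then 2 * xc x * phi (xa x)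
  else if 0 ≤ xa x ∧ xa x / 2 < xc x ∧ xc x ≤ xa x then
    2 * (xa x - xc x) * phi (xa x) + (2 * xc x - xa x)
  else xc x

/-- The scaling limit `f∞` of the counterexample. -/
noncomputable def fInfEx (x : Fin 2 → ℝ) : ℝ :=
  if 0 ≤ xa x ∧ 0 ≤ xc x ∧ xc x ≤ xa x / 2 then 2 * xc x
  else if 0 ≤ xa x ∧ xa x / 2 < xc x ∧ xc x ≤ xa x then xa x
  else xc x


noncomputable def psiA (a : ℝ) : ℝ := max 0 (1 - Real.exp (-a))
noncomputable def tent (a c : ℝ) : ℝ := max 0 (min c (a - c))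

lemma psiA_nonneg (a : ℝ) : 0 ≤ psiA a := le_max_left _ _
lemma psiA_lt_one (a : ℝ) : psiA a < 1 :=
  max_lt one_pos (by linarith [Real.exp_pos (-a)])
lemma psiA_le_one (a : ℝ) : psiA a ≤ 1 := (psiA_lt_one a).le
lemma psiA_of_nonneg {a : ℝ} (h : 0 ≤ a) : psiA a = 1 - Real.exp (-a) :=
  max_eq_right (by have : Real.exp (-a) ≤ 1 := Real.exp_le_one_iff.2 (by linarith); linarith)
lemma psiA_of_nonpos {a : ℝ} (h : a ≤ 0) : psiA a = 0 :=
  max_eq_left (by have : 1 ≤ Real.exp (-a) := Real.one_le_exp (by linarith); linarith)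
lemma psiA_mono : Monotone psiA := by
  intro a b h
  refine max_le_max le_rfl ?_
  have := Real.exp_le_exp.2 (neg_le_neg h)
  linarith

lemma tent_nonneg (a c : ℝ) : 0 ≤ tent a c := le_max_left _ _
lemma tent_of_nonpos {a : ℝ} (h : a ≤ 0) (c : ℝ) : tent a c = 0 := by
  refine max_eq_left ?_
  rcases le_total c 0 with h' | h'
  · exact (min_le_left _ _).trans h'
  · exact (min_le_right _ _).trans (by linarith)
lemma tent_le_half {a : ℝ} (h : 0 ≤ a) (c : ℝ) : tent a c ≤ a / 2 := by
  refine max_le (by linarith) ?_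
  rcases le_total c (a - c) with h' | h'
  · rw [min_eq_left h']; linarith
  · rw [min_eq_right h']; linarith
lemma tent_mono_a (c : ℝ) : Monotone (fun a => tent a c) := by
  intro a b h
  simp only [tent]
  exact max_le_max le_rfl (min_le_min le_rfl (by linarith))
lemma tent_lc (a c d : ℝ) : |tent a c - tent a d| ≤ |c - d| := by
  unfold tent
  refine (abs_max_sub_max_le_max _ _ _ _).trans ?_
  refine max_le (by simp) ?_
  refine (abs_min_sub_min_le_max _ _ _ _).trans ?_
  refine max_le le_rfl ?_
  rw [show a - c - (a - d) = -(c - d) by ring, abs_neg]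
lemma tent_la (c a b : ℝ) : |tent a c - tent b c| ≤ |a - b| := by
  unfold tent
  refine (abs_max_sub_max_le_max _ _ _ _).trans ?_
  refine max_le (by simp [abs_nonneg]) ?_
  refine (abs_min_sub_min_le_max _ _ _ _).trans ?_
  refine max_le (by simp [abs_nonneg]) ?_
  rw [show a - c - (b - c) = a - b by ring]

lemma tent_smul {c : ℝ} (hc : 0 ≤ c) (a d : ℝ) : tent (c * a) (c * d) = c * tent a d := by
  unfold tent
  rw [show c * a - c * d = c * (a - d) by ring, ← mul_min_of_nonneg _ _ hc,
    mul_max_of_nonneg _ _ hc, mul_zero]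

lemma fEx_eq (x : Fin 2 → ℝ) : fEx x = xc x + psiA (xa x) * tent (xa x) (xc x) := by
  unfold fEx
  split_ifs with h1 h2
  · obtain ⟨ha, hc0, hc2⟩ := h1
    rw [show tent (xa x) (xc x) = xc x from by
      unfold tent; rw [min_eq_left (by linarith), max_eq_right hc0]]
    rw [psiA_of_nonneg ha]; unfold phi; ring
  · obtain ⟨ha, hc1, hc2⟩ := h2
    rw [show tent (xa x) (xc x) = xa x - xc x from by
      unfold tent; rw [min_eq_right (by linarith), max_eq_right (by linarith)]]
    rw [psiA_of_nonneg ha]; unfold phi; ring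
  · rcases le_or_gt (xa x) 0 with ha | ha
    · rw [psiA_of_nonpos ha]; ring
    · have hc : xc x < 0 ∨ xa x < xc x := by
        by_contra hcon
        push_neg at hcon
        rcases le_or_gt (xc x) (xa x / 2) with h | h
        · exact h1 ⟨ha.le, hcon.1, h⟩
        · exact h2 ⟨ha.le, h, hcon.2⟩
      have ht : tent (xa x) (xc x) = 0 := by
        unfold tent
        rcases hc with h | h
        · exact max_eq_left ((min_le_left _ _).trans h.le)
        · exact max_eq_left ((min_le_right _ _).trans (by linarith))
      rw [ht]; ring

lemma fInfEx_eq (x : Fin 2 → ℝ) : fInfEx x = xc x + tent (xa x) (xc x) := by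
  unfold fInfEx
  split_ifs with h1 h2
  · obtain ⟨ha, hc0, hc2⟩ := h1
    rw [show tent (xa x) (xc x) = xc x from by
      unfold tent; rw [min_eq_left (by linarith), max_eq_right hc0]]
    ring
  · obtain ⟨ha, hc1, hc2⟩ := h2
    rw [show tent (xa x) (xc x) = xa x - xc x from by
      unfold tent; rw [min_eq_right (by linarith), max_eq_right (by linarith)]]
    ring
  · rcases le_or_gt (xa x) 0 with ha | ha
    · rw [tent_of_nonpos ha]; ring
    · have hc : xc x < 0 ∨ xa x < xc x := by
        by_contra hcon
        push_neg at hcon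
        rcases le_or_gt (xc x) (xa x / 2) with h | h
        · exact h1 ⟨ha.le, hcon.1, h⟩
        · exact h2 ⟨ha.le, h, hcon.2⟩
      have ht : tent (xa x) (xc x) = 0 := by
        unfold tent
        rcases hc with h | h
        · exact max_eq_left ((min_le_left _ _).trans h.le)
        · exact max_eq_left ((min_le_right _ _).trans (by linarith))
      rw [ht]; ring

lemma xa_shift (x : Fin 2 → ℝ) (c : ℝ) : xa (fun i => x i + c) = xa x := by
  simp only [xa]; ring
lemma xc_shift (x : Fin 2 → ℝ) (c : ℝ) : xc (fun i => x i + c) = xc x + c := by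
  simp only [xc]; ring
lemma xa_smul (c : ℝ) (x : Fin 2 → ℝ) : xa (c • x) = c * xa x := by
  simp only [xa, Pi.smul_apply, smul_eq_mul]; ring
lemma xc_smul (c : ℝ) (x : Fin 2 → ℝ) : xc (c • x) = c * xc x := by
  simp only [xc, Pi.smul_apply, smul_eq_mul]; ring

lemma fEx_shift (x : Fin 2 → ℝ) (c : ℝ) :
    fEx (fun i => x i + c) = (xc x + c) + psiA (xa x) * tent (xa x) (xc x + c) := by
  rw [fEx_eq, xa_shift, xc_shift]

lemma prod_lip {a b : ℝ} (c : ℝ) (hba : b ≤ a) :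
    psiA a * tent a c - psiA b * tent b c ≤ 2 * (a - b) := by
  rcases le_or_gt b 0 with hb | hb
  · rw [tent_of_nonpos hb, mul_zero, sub_zero]
    rcases le_or_gt a 0 with ha | ha
    · rw [tent_of_nonpos ha, mul_zero]; linarith
    · have h1 := psiA_le_one a
      have h2 := tent_le_half ha.le c
      have h3 := tent_nonneg a c
      have h4 := psiA_nonneg a
      nlinarith
  · have hpa : psiA a = 1 - Real.exp (-a) := psiA_of_nonneg (by linarith)
    have hpb : psiA b = 1 - Real.exp (-b) := psiA_of_nonneg hb.le
    have t0 := tent_nonneg b c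
    have t1 := tent_le_half hb.le c
    have t2 : tent b c ≤ tent a c := tent_mono_a c hba
    have t3 : tent a c ≤ tent b c + (a - b) := by
      have h := tent_la c a b
      rw [abs_le] at h
      have := h.2
      rw [abs_of_nonneg (by linarith : (0:ℝ) ≤ a - b)] at this
      linarith
    have e0 := Real.exp_pos (-a)
    have ebpos := Real.exp_pos (-b)
    have hEbb : Real.exp (-b) * b ≤ 1 := by
      have h5 : b ≤ Real.exp b := by linarith [Real.add_one_le_exp b]
      have h6 : Real.exp (-b) * Real.exp b = 1 := by
        rw [← Real.exp_add]; simp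
      nlinarith
    have hEsub : Real.exp (-b) - Real.exp (-a) ≤ Real.exp (-b) * (a - b) := by
      have h7 : 1 - (a - b) ≤ Real.exp (-(a - b)) := by
        linarith [Real.add_one_le_exp (-(a - b))]
      have h8 : Real.exp (-a) = Real.exp (-b) * Real.exp (-(a - b)) := by
        rw [← Real.exp_add]; ring_nf
      nlinarith
    rw [hpa, hpb]
    have h9 : (Real.exp (-b) - Real.exp (-a)) * tent b c ≤
        Real.exp (-b) * (a - b) * tent b c :=
      mul_le_mul_of_nonneg_right hEsub t0
    have h10 : Real.exp (-b) * (a - b) * tent b c ≤ (a - b) / 2 := by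
      have hh1 : Real.exp (-b) * (a - b) * tent b c ≤ Real.exp (-b) * (a - b) * (b / 2) :=
        mul_le_mul_of_nonneg_left t1 (mul_nonneg ebpos.le (by linarith))
      have hh2 : Real.exp (-b) * b * ((a - b) / 2) ≤ 1 * ((a - b) / 2) :=
        mul_le_mul_of_nonneg_right hEbb (by linarith)
      nlinarith
    have h11 : Real.exp (-a) * tent b c ≤ Real.exp (-a) * tent a c :=
      mul_le_mul_of_nonneg_left t2 e0.le
    nlinarith

lemma prod_lip' (c a b : ℝ) :
    |psiA a * tent a c - psiA b * tent b c| ≤ 2 * |a - b| := by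
  rcases le_total b a with h | h
  · rw [abs_of_nonneg (by linarith [sub_nonneg.2 h] : (0:ℝ) ≤ a - b), abs_le]
    constructor
    · have := mul_le_mul (psiA_mono h) (tent_mono_a c h) (tent_nonneg b c) (psiA_nonneg a)
      linarith
    · exact prod_lip c h
  · rw [abs_sub_comm, abs_sub_comm a b, abs_of_nonneg (by linarith : (0:ℝ) ≤ b - a), abs_le]
    constructor
    · have := mul_le_mul (psiA_mono h) (tent_mono_a c h) (tent_nonneg a c) (psiA_nonneg b)
      linarith
    · exact prod_lip c h

lemma prod_lip_c (a c d : ℝ) :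
    |psiA a * tent a c - psiA a * tent a d| ≤ |c - d| := by
  rw [← mul_sub, abs_mul, abs_of_nonneg (psiA_nonneg a)]
  have h1 := tent_lc a c d
  have h2 := psiA_le_one a
  have h3 := psiA_nonneg a
  have h4 := abs_nonneg (tent a c - tent a d)
  nlinarith

lemma xa_diff_le (x y : Fin 2 → ℝ) : |xa x - xa y| ≤ ‖x - y‖ := by
  have h0 : |x 0 - y 0| ≤ ‖x - y‖ := by
    simpa [Real.norm_eq_abs] using norm_le_pi_norm (x - y) 0
  have h1 : |x 1 - y 1| ≤ ‖x - y‖ := by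
    simpa [Real.norm_eq_abs] using norm_le_pi_norm (x - y) 1
  rw [xa, xa, abs_le]; rw [abs_le] at h0 h1
  constructor <;> [skip; skip] <;> linarith

lemma xc_diff_le (x y : Fin 2 → ℝ) : |xc x - xc y| ≤ ‖x - y‖ := by
  have h0 : |x 0 - y 0| ≤ ‖x - y‖ := by
    simpa [Real.norm_eq_abs] using norm_le_pi_norm (x - y) 0
  have h1 : |x 1 - y 1| ≤ ‖x - y‖ := by
    simpa [Real.norm_eq_abs] using norm_le_pi_norm (x - y) 1
  rw [xc, xc, abs_le]; rw [abs_le] at h0 h1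
  constructor <;> [skip; skip] <;> linarith

lemma psiA_tent_le (a c : ℝ) : psiA a * tent a c ≤ max 0 (a / 2) := by
  rcases le_or_gt a 0 with ha | ha
  · rw [tent_of_nonpos ha, mul_zero]; exact le_max_left _ _
  · have h1 := tent_le_half ha.le c
    have h2 := psiA_le_one a
    have h3 := psiA_nonneg a
    have h4 := tent_nonneg a c
    have : psiA a * tent a c ≤ a / 2 := by nlinarith
    exact this.trans (le_max_right _ _)

/-- `f` is Lipschitz and SISTr with scaling limit `f∞`; `f∞` is SISTr at the
origin (indeed `f∞(c·(1,1)) = c`), but for every `ā > 0`, `f∞` is not SISTr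
at `x̄ = ā·(1,−1)`, since `f∞(x̄ + c·(1,1)) = ā` for all `c ∈ [ā/2, ā]`. -/
theorem statement15 :
    (∃ L : ℝ, ∀ x y : Fin 2 → ℝ, |fEx x - fEx y| ≤ L * ‖x - y‖) ∧
    SISTr fEx ∧
    (∀ x : Fin 2 → ℝ,
      Filter.Tendsto (fun c : ℝ => fEx (c • x) / c) Filter.atTop
        (nhds (fInfEx x))) ∧
    SISTrAt fInfEx 0 ∧
    (∀ c : ℝ, fInfEx (fun _ => c) = c) ∧
    (∀ abar : ℝ, 0 < abar →
      (∀ c ∈ Set.Icc (abar / 2) abar,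
        fInfEx (fun i => ![abar, -abar] i + c) = abar) ∧
      ¬ SISTrAt fInfEx ![abar, -abar]) := by
  have key5 : ∀ c : ℝ, fInfEx (fun _ => c) = c := by
    intro c
    rw [fInfEx_eq]
    have ha : xa (fun _ : Fin 2 => c) = 0 := by simp [xa]
    have hc : xc (fun _ : Fin 2 => c) = c := by simp only [xc]; ring
    rw [ha, hc, tent_of_nonpos le_rfl]; ring
  refine ⟨⟨4, ?_⟩, ?_, ?_, ?_, key5, ?_⟩
  · -- Lipschitz
    intro x y
    rw [fEx_eq x, fEx_eq y]
    have h1 := prod_lip_c (xa x) (xc x) (xc y)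
    have h2 := prod_lip' (xc y) (xa x) (xa y)
    have h3 := xa_diff_le x y
    have h4 := xc_diff_le x y
    have h5 := le_abs_self (xc x - xc y)
    have h6 := neg_abs_le (xc x - xc y)
    rw [abs_le] at h1 h2 ⊢
    constructor
    · linarith [h1.1, h2.1]
    · linarith [h1.2, h2.2]
  · -- SISTr fEx
    intro x
    constructor
    · intro c1 c2 hlt
      simp only [fEx_shift]
      have hl := tent_lc (xa x) (xc x + c1) (xc x + c2)
      rw [show xc x + c1 - (xc x + c2) = c1 - c2 by ring,
        abs_of_nonpos (by linarith : c1 - c2 ≤ 0), abs_le] at hl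
      have h1 := psiA_lt_one (xa x)
      have h2 := psiA_nonneg (xa x)
      have e1 : psiA (xa x) * (tent (xa x) (xc x + c1) - tent (xa x) (xc x + c2)) ≤
          psiA (xa x) * (c2 - c1) := by
        apply mul_le_mul_of_nonneg_left _ h2
        linarith [hl.2]
      have e2 : psiA (xa x) * (c2 - c1) < 1 * (c2 - c1) :=
        mul_lt_mul_of_pos_right h1 (by linarith)
      nlinarith
    · have hrw : (fun c : ℝ => fEx (fun i => x i + c)) =
          fun c => (xc x + c) + psiA (xa x) * tent (xa x) (xc x + c) := by
        funext c; exact fEx_shift x c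
      rw [hrw]
      apply Continuous.surjective
      · unfold tent
        fun_prop
      · apply Filter.tendsto_atTop_mono
          (fun c => le_add_of_nonneg_right
            (mul_nonneg (psiA_nonneg _) (tent_nonneg _ _)))
        exact Filter.tendsto_atTop_add_const_left _ _ Filter.tendsto_id
      · apply Filter.tendsto_atBot_mono
          (f := fun c => (xc x + c) + max 0 (xa x / 2))
          (fun c => by linarith [psiA_tent_le (xa x) (xc x + c)])
        exact Filter.tendsto_atBot_add_const_right _ _
          (Filter.tendsto_atBot_add_const_left _ _ Filter.tendsto_id)
  · -- scaling limit
    intro x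
    have hT : Filter.Tendsto (fun c : ℝ => xc x + psiA (c * xa x) * tent (xa x) (xc x))
        Filter.atTop (nhds (fInfEx x)) := by
      rw [fInfEx_eq]
      apply Filter.Tendsto.const_add
      rcases eq_or_ne (tent (xa x) (xc x)) 0 with h0 | h0
      · rw [h0]; simp only [mul_zero]; exact tendsto_const_nhds
      · have ha : 0 < xa x := by
          by_contra hA
          push_neg at hA
          exact h0 (tent_of_nonpos hA _)
        have h1 : Filter.Tendsto (fun c : ℝ => c * xa x) Filter.atTop Filter.atTop :=
          Filter.Tendsto.atTop_mul_const ha Filter.tendsto_id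
        have h2 : Filter.Tendsto (fun c : ℝ => Real.exp (-(c * xa x)))
            Filter.atTop (nhds 0) :=
          Real.tendsto_exp_atBot.comp (Filter.tendsto_neg_atTop_atBot.comp h1)
        have h3 : Filter.Tendsto (fun c : ℝ => psiA (c * xa x)) Filter.atTop (nhds 1) := by
          have := (tendsto_const_nhds (x := (0:ℝ)) (f := Filter.atTop)).max
            ((tendsto_const_nhds (x := (1:ℝ)) (f := Filter.atTop)).sub h2)
          simpa [psiA] using this
        simpa using h3.mul_const (tent (xa x) (xc x))
    refine Filter.Tendsto.congr' ?_ hT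
    filter_upwards [Filter.eventually_gt_atTop 0] with c hc
    rw [fEx_eq, xa_smul, xc_smul, tent_smul hc.le]
    field_simp
  · -- SISTrAt fInfEx 0
    have hid : (fun c : ℝ => fInfEx (fun i => (0 : Fin 2 → ℝ) i + c)) = id := by
      funext c
      simp only [Pi.zero_apply, zero_add]
      exact key5 c
    constructor
    · rw [hid]; exact strictMono_id
    · rw [hid]; exact Function.surjective_id
  · -- the counterexample point
    intro abar hab
    have hxa : ∀ c : ℝ, xa (fun i => ![abar, -abar] i + c) = abar := by
      intro c
      simp only [xa, Matrix.cons_val_zero, Matrix.cons_val_one, Matrix.head_cons]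
      ring
    have hxc : ∀ c : ℝ, xc (fun i => ![abar, -abar] i + c) = c := by
      intro c
      simp only [xc, Matrix.cons_val_zero, Matrix.cons_val_one, Matrix.head_cons]
      ring
    have hval : ∀ c ∈ Set.Icc (abar / 2) abar,
        fInfEx (fun i => ![abar, -abar] i + c) = abar := by
      intro c hc
      rw [fInfEx_eq, hxa, hxc]
      have ht : tent abar c = abar - c := by
        unfold tent
        rw [min_eq_right (by linarith [hc.1]), max_eq_right (by linarith [hc.2])]
      rw [ht]; ring
    refine ⟨hval, ?_⟩
    rintro ⟨hm, -⟩
    have h := hm (show abar / 2 < abar by linarith)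
    simp only at h
    rw [hval (abar / 2) ⟨le_rfl, by linarith⟩, hval abar ⟨by linarith, le_rfl⟩] at h
    exact lt_irrefl _ h
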